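/- Let (W,S) be an irreducible infinite right-angled Coxeter system, and suppose D_L(w) ⊆ D_R(v) for v,w ∈ W. If s_1,…,s_n is an enumeration of S \ D_R(v) and u = s_1 ⋯ s_n, then |vuw| = |v| + n + |w|. -/

import Mathlib

/-!
In a right-angled Coxeter group two left descents of the same element commute: if `s, t` with
`m(s,t) = ∞` were both descents of `x`, the exchange condition would make `x` start with reduced
alternating words `⋯ s t s t` of every length (these words are reduced because `s` and `t` act
on `ℤ` as the reflections `n ↦ -1 - n` and `n ↦ 1 - n`). Consequently, for a non-descent `s` of
`x`, the left descents of `s x` are `s` and descents of `x` commuting with `s`.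

Applied letter by letter, `u w` is reduced, and each left descent of `u w` either lies in
`S \ D_R(v)` or is a descent of `w` commuting with all of `S \ D_R(v)`; the latter lies in
`D_R(v)` by hypothesis, so it commutes with all of `D_R(v)` as well, i.e. it is central, which
irreducibility forbids in an infinite group. Hence `D_L(u w) ∩ D_R(v) = ∅`, and in a
right-angled group this already forces `|v · u w| = |v| + |u w|`.

The exchange condition itself comes from Bourbaki's permutation representation on
`W × Bool`; for right-angled Coxeter matrices its defining relations are immediate.
-/

def CoxeterMatrix.IsRightAngled {B : Type*} (M : CoxeterMatrix B) : Prop :=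
  ∀ i j : B, i ≠ j → M i j = 2 ∨ M i j = 0

namespace CoxeterSystem

open List

variable {B W : Type*} [Group W] {M : CoxeterMatrix B} (cs : CoxeterSystem M W)

local prefix:100 "s" => cs.simple
local prefix:100 "π" => cs.wordProd
local prefix:100 "ℓ" => cs.length

theorem simple_mul_simple_comm_of_eq_two {i j : B} (h : M i j = 2) :
    s i * s j = s j * s i := by
  have := cs.simple_mul_simple_pow i j
  rw [h, sq] at this
  simpa [cs.inv_simple] using eq_inv_of_mul_eq_one_left this

theorem conj_simple_conj_simple (i : B) (t : W) :
    MulAut.conj (s i) (MulAut.conj (s i) t) = t := by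
  simp [cs.inv_simple, ← mul_assoc, cs.simple_mul_simple_self]

theorem conj_simple_eq_simple_iff (i : B) (t : W) :
    MulAut.conj (s i) t = s i ↔ t = s i := by
  rw [← (MulAut.conj (s i)).injective.eq_iff]
  simp [cs.inv_simple, ← mul_assoc, cs.simple_mul_simple_self]

open scoped Classical in
noncomputable def reflectionPerm (i : B) : Equiv.Perm (W × Bool) :=
  Function.Involutive.toPerm (fun p ↦ (MulAut.conj (s i) p.1, xor p.2 (decide (p.1 = s i))))
    (by
      rintro ⟨t, ε⟩
      simp only [conj_simple_eq_simple_iff, conj_simple_conj_simple, Bool.xor_assoc,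
        Bool.xor_self, Bool.xor_false])

open scoped Classical in
theorem reflectionPerm_apply (i : B) (t : W) (ε : Bool) :
    cs.reflectionPerm i (t, ε) = (MulAut.conj (s i) t, xor ε (decide (t = s i))) := rfl

theorem reflectionPerm_mul_self (i : B) : cs.reflectionPerm i * cs.reflectionPerm i = 1 :=
  Equiv.ext <| Function.Involutive.toPerm_involutive _

theorem reflectionPerm_commute {i j : B} (h : M i j = 2) :
    Commute (cs.reflectionPerm i) (cs.reflectionPerm j) := by
  have hij := cs.simple_mul_simple_comm_of_eq_two h
  have hconj : ∀ {k l : B}, s k * s l = s l * s k → MulAut.conj (s l) (s k) = s k := by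
    intro k l hkl
    simp [cs.inv_simple, ← hkl, mul_assoc, cs.simple_mul_simple_self]
  classical
  refine Equiv.ext fun ⟨t, ε⟩ ↦ ?_
  have hi : MulAut.conj (s j) t = s i ↔ t = s i := by
    conv_lhs => rw [← hconj hij]
    exact (MulAut.conj (s j)).injective.eq_iff
  have hj : MulAut.conj (s i) t = s j ↔ t = s j := by
    conv_lhs => rw [← hconj hij.symm]
    exact (MulAut.conj (s i)).injective.eq_iff
  simp only [Equiv.Perm.mul_apply, reflectionPerm_apply, ← MulAut.mul_apply, ← map_mul, hij, hi,
    hj, Bool.xor_assoc, Bool.xor_comm (decide (t = s i))]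

theorem isLiftable_reflectionPerm (hM : M.IsRightAngled) : M.IsLiftable cs.reflectionPerm := by
  intro i j
  obtain rfl | hij := eq_or_ne i j
  · rw [M.diagonal, pow_one, reflectionPerm_mul_self]
  · obtain h | h := hM i j hij
    · rw [h, (cs.reflectionPerm_commute h).mul_pow, sq, sq, reflectionPerm_mul_self,
        reflectionPerm_mul_self, one_mul]
    · rw [h, pow_zero]

noncomputable def reflectionRep (hM : M.IsRightAngled) : W →* Equiv.Perm (W × Bool) :=
  cs.lift ⟨cs.reflectionPerm, cs.isLiftable_reflectionPerm hM⟩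

theorem reflectionRep_simple (hM : M.IsRightAngled) (i : B) :
    cs.reflectionRep hM (s i) = cs.reflectionPerm i :=
  cs.lift_apply_simple _ i

open scoped Classical in
theorem reflectionRep_inv_wordProd (hM : M.IsRightAngled) (ω : List B) (t : W) (ε : Bool) :
    cs.reflectionRep hM (π ω)⁻¹ (t, ε) =
      (MulAut.conj (π ω)⁻¹ t, xor ε ((cs.leftInvSeq ω).count t).bodd) := by
  induction ω generalizing t ε with
  | nil => simp
  | cons i ω ih =>
    have hmap := count_map_of_injective (cs.leftInvSeq ω) _ (MulAut.conj (s i)).injective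
      (MulAut.conj (s i) t)
    rw [conj_simple_conj_simple] at hmap
    have hcount : (cs.leftInvSeq (i :: ω)).count t =
        (cs.leftInvSeq ω).count (MulAut.conj (s i) t) + if t = s i then 1 else 0 := by
      rw [leftInvSeq, count_cons, hmap]
      simp only [beq_iff_eq, @eq_comm _ (s i)]
    rw [cs.wordProd_cons, mul_inv_rev, cs.inv_simple, map_mul, Equiv.Perm.mul_apply,
      reflectionRep_simple, reflectionPerm_apply, ih, hcount, Nat.bodd_add, map_mul,
      MulAut.mul_apply]
    split_ifs with h <;> simp [h, Bool.xor_comm]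

open scoped Classical in
theorem bodd_count_leftInvSeq_congr (hM : M.IsRightAngled) {ω ω' : List B} (h : π ω = π ω')
    (t : W) : ((cs.leftInvSeq ω).count t).bodd = ((cs.leftInvSeq ω').count t).bodd := by
  have h₁ := cs.reflectionRep_inv_wordProd hM ω t false
  have h₂ := cs.reflectionRep_inv_wordProd hM ω' t false
  rw [h, h₂] at h₁
  simpa using (congrArg Prod.snd h₁).symm

theorem simple_mem_leftInvSeq_of_isLeftDescent (hM : M.IsRightAngled) {ω : List B} {i : B}
    (h : cs.IsLeftDescent (π ω) i) : s i ∈ cs.leftInvSeq ω := by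
  classical
  obtain ⟨ω', hω', hπω'⟩ := cs.exists_isReduced (s i * π ω)
  have hπ : π (i :: ω') = π ω := by
    rw [wordProd_cons, ← hπω', simple_mul_simple_cancel_left]
  have hred : cs.IsReduced (i :: ω') := by
    have := cs.isLeftDescent_iff.mp h
    rw [IsReduced, hπ, length_cons, ← hω'.eq, ← hπω', this]
  have hone : (cs.leftInvSeq (i :: ω')).count (s i) = 1 :=
    count_eq_one_of_mem hred.nodup_leftInvSeq mem_cons_self
  have hodd := cs.bodd_count_leftInvSeq_congr hM hπ (s i)
  rw [hone] at hodd
  refine count_pos_iff.mp (Nat.pos_of_ne_zero fun h0 ↦ ?_)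
  simp [h0] at hodd

theorem exists_eraseIdx_of_isLeftDescent (hM : M.IsRightAngled) {ω : List B} {i : B}
    (h : cs.IsLeftDescent (π ω) i) : ∃ j < ω.length, s i * π ω = π (ω.eraseIdx j) := by
  obtain ⟨j, hj, hget⟩ := mem_iff_getElem.mp (cs.simple_mem_leftInvSeq_of_isLeftDescent hM h)
  rw [length_leftInvSeq] at hj
  refine ⟨j, hj, ?_⟩
  rw [← hget, ← getD_eq_getElem _ 1, getD_leftInvSeq_mul_wordProd]

theorem length_wordProd_eraseIdx_lt {ω : List B} {j : ℕ} (hj : j < ω.length) :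
    ℓ (π (ω.eraseIdx j)) < ω.length :=
  (cs.length_wordProd_le _).trans_lt (by rw [length_eraseIdx_of_lt hj]; omega)

theorem simple_injective (hM : M.IsRightAngled) : Function.Injective cs.simple := by
  classical
  intro a b hab
  by_contra hne
  have hlift : M.IsLiftable fun i ↦ if i = a then (-1 : ℤˣ) else 1 := fun i j ↦ by
    obtain rfl | hij := eq_or_ne i j
    · rw [M.diagonal, pow_one, Int.units_mul_self]
    · obtain h | h := hM i j hij
      · rw [h, sq, Int.units_mul_self]
      · rw [h, pow_zero]
  have hχ := congrArg (cs.lift ⟨_, hlift⟩) hab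
  rw [lift_apply_simple, lift_apply_simple, if_pos rfl, if_neg (Ne.symm hne)] at hχ
  exact absurd hχ (by decide)

open scoped Classical in
noncomputable def dihedralPerm (a b i : B) : Equiv.Perm ℤ :=
  if i = a then Equiv.subLeft (-1) else if i = b then Equiv.subLeft 1 else 1

theorem dihedralPerm_mul_self (a b i : B) : dihedralPerm a b i * dihedralPerm a b i = 1 := by
  unfold dihedralPerm
  split_ifs <;> ext <;> simp

theorem isLiftable_dihedralPerm (hM : M.IsRightAngled) {a b : B} (h0 : M a b = 0) :
    M.IsLiftable (dihedralPerm a b) := fun i j ↦ by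
  obtain rfl | hij := eq_or_ne i j
  · rw [M.diagonal, pow_one, dihedralPerm_mul_self]
  · obtain h | h := hM i j hij
    · have : dihedralPerm a b i = 1 ∨ dihedralPerm a b j = 1 := by
        unfold dihedralPerm
        split_ifs <;> simp_all [M.symmetric]
      rcases this with h1 | h1 <;> simp [h, sq, h1, dihedralPerm_mul_self]
    · rw [h, pow_zero]

theorem natAbs_dihedralPerm_le (a b i : B) (x : ℤ) :
    (dihedralPerm a b i x).natAbs ≤ x.natAbs + 1 := by
  unfold dihedralPerm
  split_ifs <;> simp only [Equiv.subLeft_apply, Equiv.Perm.one_apply] <;> omega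

theorem isReduced_alternatingWord (hM : M.IsRightAngled) {a b : B} (h0 : M a b = 0) (k : ℕ) :
    cs.IsReduced (alternatingWord a b k) := by
  have hab : a ≠ b := by rintro rfl; simp at h0
  set φ := cs.lift ⟨_, isLiftable_dihedralPerm hM h0⟩
  have hbound : ∀ ω : List B, (φ (π ω) 0).natAbs ≤ ω.length := by
    intro ω
    induction ω with
    | nil => simp
    | cons i ω ih =>
      rw [wordProd_cons, map_mul, Equiv.Perm.mul_apply, lift_apply_simple, length_cons]
      exact (natAbs_dihedralPerm_le a b i _).trans (by omega)
  have halt : ∀ k, φ (π (alternatingWord a b k)) 0 = if Even k then -(k : ℤ) else k := by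
    intro k
    induction k with
    | zero => simp [alternatingWord]
    | succ k ih =>
      rw [alternatingWord_succ', wordProd_cons, map_mul, Equiv.Perm.mul_apply, ih,
        lift_apply_simple]
      by_cases hk : Even k
      · simp only [dihedralPerm, hk, if_true, hab.symm, if_false, Nat.even_add_one,
          not_true_eq_false, Equiv.subLeft_apply]
        push_cast
        ring
      · simp only [dihedralPerm, hk, if_true, if_false, Nat.even_add_one, not_false_eq_true,
          Equiv.subLeft_apply]
        push_cast
        ring
  obtain ⟨ω, hω, hπ⟩ := cs.exists_isReduced (π (alternatingWord a b k))
  have hk := hbound ω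
  rw [← hπ, halt] at hk
  refine le_antisymm (cs.length_wordProd_le _) ?_
  rw [length_alternatingWord, hπ, hω.eq]
  split_ifs at hk <;> omega

theorem exists_alternatingWord_mul_of_isLeftDescent (hM : M.IsRightAngled) {a b : B}
    (h0 : M a b = 0) {x : W} (ha : cs.IsLeftDescent x a) (hb : cs.IsLeftDescent x b) (k : ℕ) :
    ∃ y, x = π (alternatingWord a b k) * y ∧ ℓ x = k + ℓ y := by
  induction k with
  | zero => exact ⟨x, by simp [alternatingWord]⟩
  | succ k ih =>
    obtain ⟨y, rfl, hlen⟩ := ih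
    set c := if Even k then b else a
    have hc : cs.IsLeftDescent (π (alternatingWord a b k) * y) c := by
      by_cases hk : Even k <;> simp [c, hk, ha, hb]
    have hsucc : π (alternatingWord a b (k + 1)) = s c * π (alternatingWord a b k) := by
      rw [alternatingWord_succ', wordProd_cons]
    obtain ⟨ρ, hρ, rfl⟩ := cs.exists_isReduced y
    rw [← wordProd_append] at hc
    obtain ⟨j, hj, hexch⟩ := cs.exists_eraseIdx_of_isLeftDescent hM hc
    rw [length_append, length_alternatingWord] at hj
    obtain hjk | hkj := lt_or_ge j k
    · rw [eraseIdx_append_of_lt_length (by rwa [length_alternatingWord]), wordProd_append,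
        wordProd_append, ← mul_assoc, ← hsucc] at hexch
      have hred := cs.isReduced_alternatingWord hM h0 (k + 1)
      rw [IsReduced, mul_right_cancel hexch, length_alternatingWord] at hred
      have := cs.length_wordProd_eraseIdx_lt (ω := alternatingWord a b k)
        (by rwa [length_alternatingWord])
      rw [length_alternatingWord] at this
      omega
    · rw [eraseIdx_append_of_length_le (by rwa [length_alternatingWord]), wordProd_append,
        wordProd_append, length_alternatingWord] at hexch
      have hx : π (alternatingWord a b k) * π ρ =
          π (alternatingWord a b (k + 1)) * π (ρ.eraseIdx (j - k)) := by
        rw [hsucc, mul_assoc, ← hexch, simple_mul_simple_cancel_left]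
      refine ⟨π (ρ.eraseIdx (j - k)), hx, ?_⟩
      have h₁ := cs.length_wordProd_eraseIdx_lt (ω := ρ) (j := j - k) (by omega)
      have h₂ := hx ▸ cs.length_mul_le (π (alternatingWord a b (k + 1))) (π (ρ.eraseIdx (j - k)))
      have h₃ := cs.length_wordProd_le (alternatingWord a b (k + 1))
      rw [length_alternatingWord] at h₃
      rw [hρ.eq] at hlen
      omega

theorem eq_two_of_isLeftDescent (hM : M.IsRightAngled) {x : W} {a b : B} (hab : a ≠ b)
    (ha : cs.IsLeftDescent x a) (hb : cs.IsLeftDescent x b) : M a b = 2 := by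
  refine (hM a b hab).resolve_right fun h0 ↦ ?_
  obtain ⟨y, -, hlen⟩ := cs.exists_alternatingWord_mul_of_isLeftDescent hM h0 ha hb (ℓ x + 1)
  omega

theorem eq_two_of_isRightDescent (hM : M.IsRightAngled) {x : W} {a b : B} (hab : a ≠ b)
    (ha : cs.IsRightDescent x a) (hb : cs.IsRightDescent x b) : M a b = 2 :=
  cs.eq_two_of_isLeftDescent hM hab (cs.isLeftDescent_inv_iff.mpr ha)
    (cs.isLeftDescent_inv_iff.mpr hb)

theorem eq_or_isLeftDescent_of_isLeftDescent_simple_mul (hM : M.IsRightAngled) {x : W}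
    {a b : B} (ha : ¬cs.IsLeftDescent x a) (hb : cs.IsLeftDescent (s a * x) b) :
    b = a ∨ (cs.IsLeftDescent x b ∧ M a b = 2) := by
  refine or_iff_not_imp_left.mpr fun hba ↦ ?_
  have hax := cs.not_isLeftDescent_iff.mp ha
  have hab : M a b = 2 := cs.eq_two_of_isLeftDescent hM (Ne.symm hba)
    (by rw [IsLeftDescent, simple_mul_simple_cancel_left, hax]; omega) hb
  refine ⟨by_contra fun hbx ↦ ?_, hab⟩
  have hcomm := cs.simple_mul_simple_comm_of_eq_two hab
  have hbx_len := cs.not_isLeftDescent_iff.mp hbx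
  have hbax := cs.isLeftDescent_iff.mp hb
  obtain ⟨ρ, hρ, rfl⟩ := cs.exists_isReduced x
  have hdesc : cs.IsLeftDescent (π (b :: ρ)) a := by
    rw [IsLeftDescent, wordProd_cons, ← mul_assoc, hcomm, mul_assoc]
    omega
  obtain ⟨j, hj, hexch⟩ := cs.exists_eraseIdx_of_isLeftDescent hM hdesc
  cases j with
  | zero =>
    rw [eraseIdx_cons_zero, wordProd_cons, ← mul_assoc, mul_eq_right,
      mul_eq_one_iff_eq_inv, inv_simple] at hexch
    exact hba (cs.simple_injective hM hexch).symm
  | succ j =>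
    rw [eraseIdx_cons_succ, wordProd_cons, wordProd_cons, ← mul_assoc, hcomm, mul_assoc,
      mul_right_inj] at hexch
    have := cs.length_wordProd_eraseIdx_lt (ω := ρ) (j := j) (by simpa using hj)
    rw [← hexch, hax, hρ.eq] at this
    omega

theorem eq_or_isRightDescent_of_isRightDescent_mul_simple (hM : M.IsRightAngled) {x : W}
    {a b : B} (ha : ¬cs.IsRightDescent x a) (hb : cs.IsRightDescent (x * s a) b) :
    b = a ∨ (cs.IsRightDescent x b ∧ M a b = 2) := by
  rw [← isLeftDescent_inv_iff] at ha hb ⊢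
  rw [mul_inv_rev, inv_simple] at hb
  exact cs.eq_or_isLeftDescent_of_isLeftDescent_simple_mul hM ha hb

theorem length_wordProd_mul_and_isLeftDescent_of_nodup (hM : M.IsRightAngled) {ω : List B}
    (hω : ω.Nodup) {w : W} (hw : ∀ i ∈ ω, ¬cs.IsLeftDescent w i) :
    ℓ (π ω * w) = ω.length + ℓ w ∧ ∀ b, cs.IsLeftDescent (π ω * w) b →
      b ∈ ω ∨ (cs.IsLeftDescent w b ∧ ∀ j ∈ ω, M j b = 2) := by
  induction ω with
  | nil => simp
  | cons c ω ih =>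
    obtain ⟨hc, hω⟩ := nodup_cons.mp hω
    obtain ⟨hlen, hdesc⟩ := ih hω fun i hi ↦ hw i (mem_cons_of_mem c hi)
    have hcω : ¬cs.IsLeftDescent (π ω * w) c := fun h ↦ (hdesc c h).elim hc
      fun ⟨hcw, _⟩ ↦ hw c mem_cons_self hcw
    rw [wordProd_cons, mul_assoc]
    refine ⟨by rw [cs.not_isLeftDescent_iff.mp hcω, hlen, length_cons]; omega, fun b hb ↦ ?_⟩
    obtain rfl | ⟨hb, hcb⟩ := cs.eq_or_isLeftDescent_of_isLeftDescent_simple_mul hM hcω hb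
    · exact .inl mem_cons_self
    obtain hbω | ⟨hbw, hωb⟩ := hdesc b hb
    · exact .inl (mem_cons_of_mem c hbω)
    · exact .inr ⟨hbw, forall_mem_cons.mpr ⟨hcb, hωb⟩⟩

theorem length_mul_of_isLeftDescent_not_isRightDescent (hM : M.IsRightAngled) {v z : W}
    (h : ∀ i, cs.IsLeftDescent z i → ¬cs.IsRightDescent v i) : ℓ (v * z) = ℓ v + ℓ z := by
  obtain ⟨n, hn⟩ : ∃ n, ℓ z = n := ⟨_, rfl⟩
  induction n generalizing v z with
  | zero => simp [cs.length_eq_zero_iff.mp hn]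
  | succ n ih =>
    obtain ⟨i, hi⟩ := cs.exists_leftDescent_of_ne_one (w := z) fun h1 ↦ by simp [h1] at hn
    have hiz := cs.isLeftDescent_iff.mp hi
    have hvi := cs.not_isRightDescent_iff.mp (h i hi)
    have hi' : ¬cs.IsLeftDescent (s i * z) i :=
      cs.isLeftDescent_iff_not_isLeftDescent_mul.mp hi
    have h' : ∀ b, cs.IsLeftDescent (s i * z) b → ¬cs.IsRightDescent (v * s i) b := by
      intro b hbz hbvi
      obtain rfl | ⟨hbv, hib⟩ :=
        cs.eq_or_isRightDescent_of_isRightDescent_mul_simple hM (h i hi) hbvi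
      · exact hi' hbz
      refine h b ?_ hbv
      have hbiz := cs.isLeftDescent_iff.mp hbz
      have := cs.length_simple_mul (s b * (s i * z)) i
      rw [← mul_assoc (s i), cs.simple_mul_simple_comm_of_eq_two hib, mul_assoc,
        simple_mul_simple_cancel_left] at this
      rw [IsLeftDescent]
      omega
    have := ih h' (by omega)
    rw [mul_assoc, simple_mul_simple_cancel_left, hvi] at this
    omega

end CoxeterSystem

theorem CoxeterSystem.exists_ne_two_of_irreducible {B W : Type*} [Group W] {M : CoxeterMatrix B}
    (cs : CoxeterSystem M W) [Infinite W]
    (hirr : ∀ T : Set B, (∀ i ∈ T, ∀ j ∉ T, M i j = 2) → T = ∅ ∨ T = Set.univ) (i : B) :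
    ∃ j ≠ i, M i j ≠ 2 := by
  by_contra! hcentral
  obtain hempty | huniv := hirr {i} fun i' hi' j hj ↦ (Set.mem_singleton_iff.mp hi') ▸
    hcentral j hj
  · exact Set.singleton_ne_empty i hempty
  have hB : ∀ j, j = i := fun j ↦ Set.eq_univ_iff_forall.mp huniv j
  have hW : ∀ w : W, w ∈ ({1, cs.simple i} : Set W) := fun w ↦
    cs.simple_induction_left w (by simp) fun w j hw ↦ by
      rcases hw with rfl | rfl <;> simp [hB j]
  have : Finite W := Set.finite_univ_iff.mp ((Set.toFinite _).subset fun w _ ↦ hW w)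
  exact not_finite W

/-- Let `(W,S)` be an irreducible infinite right-angled Coxeter system, `v, w ∈ W` with
`D_L(w) ⊆ D_R(v)`. If `ω = [s_1, …, s_n]` is an enumeration (without repetition) of
`S \ D_R(v)` and `u = s_1 ⋯ s_n`, then `|v * u * w| = |v| + n + |w|`. -/
theorem irreducible_infinite_right_angled_join_formula
    {B W : Type*} [Group W] (M : CoxeterMatrix B) (cs : CoxeterSystem M W)
    [Infinite W]
    (rightAngled : ∀ i j : B, i ≠ j → M i j = 2 ∨ M i j = 0)
    (irreducible : ∀ T : Set B, (∀ i ∈ T, ∀ j ∉ T, M i j = 2) → T = ∅ ∨ T = Set.univ)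
    (v w : W)
    (hsub : {i : B | cs.IsLeftDescent w i} ⊆ {i : B | cs.IsRightDescent v i})
    (ω : List B) (hnodup : ω.Nodup)
    (henum : ∀ i : B, i ∈ ω ↔ ¬ cs.IsRightDescent v i) :
    cs.length (v * cs.wordProd ω * w) = cs.length v + ω.length + cs.length w := by
  obtain ⟨hlen, hdesc⟩ := cs.length_wordProd_mul_and_isLeftDescent_of_nodup rightAngled hnodup
    fun i hi hw ↦ (henum i).mp hi (hsub hw)
  have hdisj : ∀ i, cs.IsLeftDescent (cs.wordProd ω * w) i → ¬cs.IsRightDescent v i := by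
    intro i hi hvi
    obtain hiω | ⟨-, hcomm⟩ := hdesc i hi
    · exact (henum i).mp hiω hvi
    obtain ⟨j, hji, hij⟩ := cs.exists_ne_two_of_irreducible irreducible i
    by_cases hjω : j ∈ ω
    · exact hij (M.symmetric j i ▸ hcomm j hjω)
    · exact hij (cs.eq_two_of_isRightDescent rightAngled hji.symm hvi
        (not_not.mp ((henum j).not.mp hjω)))
  rw [mul_assoc, cs.length_mul_of_isLeftDescent_not_isRightDescent rightAngled hdisj, hlen,
    add_assoc]
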